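/- arXiv:2411.05367 — 3 statements merged into one kernel-verified Lean document; each statement's English description precedes it below -/
import Mathlib

section
/- For every rationally independent sequence α ∈ [0,1]^ℕ satisfying the infinite-dimensional Diophantine condition |α·k| ≥ ν₀ / ∏_{j∈ℕ} (1 + ⟨⟨j⟩⟩^{1+τ₀} |k_j|^{1+τ₀}) for all nonzero finitely supported integer vectors k, and every τ > τ₀ + 1, the set of real numbers ω satisfying |ω α·k − 2nπ| ≥ ν / ∏_{j∈ℕ} (1 + ⟨⟨j⟩⟩^{1+τ} |k_j|^{1+τ}) for some ν > 0 (for all nonzero finitely supported k and all n ∈ ℤ) has full Lebesgue measure in ℝ. -/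
open MeasureTheory Complex

/-- `⟨⟨j⟩⟩ = max {|j|, 1}` -/
noncomputable def jwt (j : ℕ) : ℝ := max (j : ℝ) 1

/-- `|k|_s = ∑_j ⟨⟨j⟩⟩^s |k_j|` for a finitely supported integer vector `k`. -/
noncomputable def swt (s : ℝ) (k : ℕ →₀ ℤ) : ℝ :=
  ∑ j ∈ k.support, jwt j ^ s * |(k j : ℝ)|

/-- `‖k‖₁ = ∑_j |k_j|`. -/
noncomputable def twt1 (k : ℕ →₀ ℤ) : ℝ := ∑ j ∈ k.support, |(k j : ℝ)|

/-- `∏_j (1 + ⟨⟨j⟩⟩^{1+τ} |k_j|^{1+τ})` -/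
noncomputable def dprod (τ : ℝ) (k : ℕ →₀ ℤ) : ℝ :=
  ∏ j ∈ k.support, (1 + jwt j ^ (1 + τ) * |(k j : ℝ)| ^ (1 + τ))

/-- `α · k` -/
noncomputable def adot (α : ℕ → ℝ) (k : ℕ →₀ ℤ) : ℝ :=
  ∑ j ∈ k.support, α j * (k j : ℝ)

/-- `k · σ` for complex `σ`. -/
noncomputable def cdot (k : ℕ →₀ ℤ) (σ : ℕ → ℂ) : ℂ :=
  ∑ j ∈ k.support, (k j : ℂ) * σ j

/-- The weighted ℓ¹ Fourier norm `‖h‖_ρ = ∑_k |h_k| e^{ρ |k|_s}` (valued in `ℝ≥0∞`). -/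
noncomputable def anorm (ρ s : ℝ) (h : (ℕ →₀ ℤ) → ℂ) : ENNReal :=
  ∑' k : ℕ →₀ ℤ, (‖h k‖₊ : ENNReal) * ENNReal.ofReal (Real.exp (ρ * swt s k))

/-- Evaluation of a Fourier coefficient family at a (complexified) point of the torus. -/
noncomputable def aeval (h : (ℕ →₀ ℤ) → ℂ) (σ : ℕ → ℂ) : ℂ :=
  ∑' k : ℕ →₀ ℤ, h k * Complex.exp (Complex.I * cdot k σ)

/-- The thickened infinite-dimensional torus (imaginary parts of width `ρ ⟨⟨j⟩⟩^s`). -/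
def Strip (ρ s : ℝ) : Set (ℕ → ℂ) := {σ | ∀ j, |(σ j).im| ≤ ρ * jwt j ^ s}

/-- `F` is represented on the strip of width `ρ` by the Fourier coefficients `c`. -/
def HasCoeffsOn (ρ s : ℝ) (F : (ℕ → ℂ) → ℂ) (c : (ℕ →₀ ℤ) → ℂ) : Prop :=
  ∀ σ ∈ Strip ρ s, HasSum (fun k : ℕ →₀ ℤ => c k * Complex.exp (Complex.I * cdot k σ)) (F σ)


/-!
Fix `M` and `ν > 0`. For `k ≠ 0`, the `ω ∈ [-M, M]` with `|ω α·k − 2nπ| < ν / D_τ(k)` for some `n`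
lie in `O(M |α·k| + 1)` intervals of length `2ν / (D_τ(k) |α·k|)`, where `D_τ = dprod τ`; by the
Diophantine bound `|α·k| ≥ ν₀ / D_τ₀(k)` their total length is `O(ν D_τ₀(k) / D_τ(k))`.
Factorwise, `D_τ₀(k) / D_τ(k) ≤ ∏_j 2 (⟨⟨j⟩⟩ |k_j|)^{τ₀-τ}`, and since `τ - τ₀ > 1` this majorant is
summable over finitely supported `k` (identify `k` with its graph, a finite subset of `ℕ × ℤ`).
Hence the set of non-Diophantine `ω` in `[-M, M]` has measure `O(ν)` for every `ν`, i.e. is null.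
-/

open Set Real Filter Topology

theorem Finsupp.summable_prod_of_summable_uncurry {ι M : Type*} [Zero M] {f : ι → M → ℝ}
    (hf : ∀ i m, 0 ≤ f i m) (hs : Summable (Function.uncurry f)) :
    Summable fun k : ι →₀ M => k.prod f :=
  ((summable_finsetProd_of_summable_nonneg (f := Function.uncurry f) (fun p => hf p.1 p.2)
    hs).comp_injective (Finsupp.graph_injective ι M)).congr fun _ => Finset.prod_map _ _ _

lemma one_le_jwt (j : ℕ) : 1 ≤ jwt j := le_max_right _ _

lemma jwt_pos (j : ℕ) : 0 < jwt j := one_pos.trans_le (one_le_jwt j)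

lemma summable_jwt_rpow_neg {δ : ℝ} (hδ : 1 < δ) : Summable fun j : ℕ => jwt j ^ (-δ) := by
  refine (summable_nat_add_iff 1).1 ?_
  have h : Summable fun j : ℕ => ((j + 1 : ℕ) : ℝ) ^ (-δ) :=
    (summable_nat_add_iff 1).2 (Real.summable_nat_rpow.2 (by linarith))
  refine h.congr fun j => ?_
  rw [jwt, max_eq_left (by exact_mod_cast Nat.succ_pos j)]

lemma one_add_rpow_div_one_add_rpow_le {x p δ : ℝ} (hx : 1 ≤ x) (hp : 0 ≤ p) :
    (1 + x ^ p) / (1 + x ^ (p + δ)) ≤ 2 * x ^ (-δ) := by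
  have hx0 : 0 < x := one_pos.trans_le hx
  have hsplit : x ^ p = x ^ (-δ) * x ^ (p + δ) := by
    rw [← Real.rpow_add hx0]; ring_nf
  rw [div_le_iff₀ (by positivity)]
  have h1 : 1 ≤ x ^ p := Real.one_le_rpow hx hp
  have h2 : 0 ≤ x ^ (-δ) := by positivity
  nlinarith

lemma dprod_eq_prod (τ : ℝ) (k : ℕ →₀ ℤ) :
    dprod τ k = k.prod fun j m => 1 + jwt j ^ (1 + τ) * |(m : ℝ)| ^ (1 + τ) := rfl

lemma one_le_dprod (τ : ℝ) (k : ℕ →₀ ℤ) : 1 ≤ dprod τ k :=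
  Finset.one_le_prod fun j _ => le_add_of_nonneg_right (by have := jwt_pos j; positivity)

lemma dprod_pos (τ : ℝ) (k : ℕ →₀ ℤ) : 0 < dprod τ k := one_pos.trans_le (one_le_dprod τ k)

lemma summable_dprod_div_dprod {τ₀ τ : ℝ} (hτ₀ : 0 ≤ 1 + τ₀) (hτ : τ₀ + 1 < τ) :
    Summable fun k : ℕ →₀ ℤ => dprod τ₀ k / dprod τ k := by
  set δ := τ - τ₀
  have hmajor : Summable fun k : ℕ →₀ ℤ =>
      k.prod fun j m => 2 * jwt j ^ (-δ) * |(m : ℝ)| ^ (-δ) :=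
    Finsupp.summable_prod_of_summable_uncurry (fun j m => by have := jwt_pos j; positivity)
      (((summable_jwt_rpow_neg (by linarith)).mul_left 2).mul_of_nonneg
        (Real.summable_abs_int_rpow (by linarith))
        (fun j => by have := jwt_pos j; positivity) fun m => by positivity)
  refine hmajor.of_nonneg_of_le (fun k => (div_pos (dprod_pos τ₀ k) (dprod_pos τ k)).le)
    fun k => ?_
  rw [dprod_eq_prod, dprod_eq_prod, Finsupp.prod, Finsupp.prod, Finsupp.prod,
    ← Finset.prod_div_distrib]
  refine Finset.prod_le_prod (fun j _ => by have := jwt_pos j; positivity) fun j hj => ?_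
  have hk : (1 : ℝ) ≤ |(k j : ℝ)| := by
    exact_mod_cast Int.one_le_abs (Finsupp.mem_support_iff.1 hj)
  have hx : 1 ≤ jwt j * |(k j : ℝ)| := one_le_mul_of_one_le_of_one_le (one_le_jwt j) hk
  have h := one_add_rpow_div_one_add_rpow_le (δ := δ) hx hτ₀
  rwa [show 1 + τ₀ + δ = 1 + τ by ring, Real.mul_rpow (jwt_pos j).le (by positivity),
    Real.mul_rpow (jwt_pos j).le (by positivity), Real.mul_rpow (jwt_pos j).le (by positivity),
    ← mul_assoc] at h

def nearMultiples (a p ε : ℝ) : Set ℝ := {ω | ∃ n : ℤ, |ω * a - n * p| < ε}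

lemma volume_Icc_inter_nearMultiples_le {a p ε M : ℝ} (ha : a ≠ 0) (hp : 0 < p) (hε : 0 ≤ ε)
    (hM : 0 ≤ M) :
    volume (Icc (-M) M ∩ nearMultiples a p ε)
      ≤ ENNReal.ofReal ((2 * ((M * |a| + ε) / p) + 1) * (2 * (ε / |a|))) := by
  have ha' : 0 < |a| := abs_pos.2 ha
  set N := ⌊(M * |a| + ε) / p⌋₊
  have hcover : Icc (-M) M ∩ nearMultiples a p ε ⊆
      ⋃ n ∈ Finset.Icc (-(N : ℤ)) N, Metric.ball (n * p / a) (ε / |a|) := by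
    rintro ω ⟨hω, n, hn⟩
    have hωa : |ω * a| ≤ M * |a| := by
      rw [abs_mul]; exact mul_le_mul_of_nonneg_right (abs_le.2 hω) (abs_nonneg a)
    have hnp : |(n : ℝ)| * p ≤ M * |a| + ε := by
      have := abs_sub (ω * a) (ω * a - n * p)
      rw [sub_sub_cancel, abs_mul (n : ℝ), abs_of_pos hp] at this
      linarith
    have hnN : n.natAbs ≤ N :=
      Nat.le_floor (by rw [Nat.cast_natAbs, Int.cast_abs]; exact (le_div_iff₀ hp).2 hnp)
    refine mem_biUnion (x := n) (by simp only [Finset.coe_Icc, mem_Icc]; omega) ?_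
    rw [Metric.mem_ball, Real.dist_eq, lt_div_iff₀ ha', ← abs_mul, sub_mul,
      div_mul_cancel₀ _ ha]
    exact hn
  have hcard : ((Finset.Icc (-(N : ℤ)) N).card : ℝ) = 2 * N + 1 := by
    rw [Int.card_Icc, show (N : ℤ) + 1 - -N = ((2 * N + 1 : ℕ) : ℤ) by push_cast; ring,
      Int.toNat_natCast]
    push_cast; ring
  calc volume (Icc (-M) M ∩ nearMultiples a p ε)
      ≤ ∑ n ∈ Finset.Icc (-(N : ℤ)) N, volume (Metric.ball (n * p / a) (ε / |a|)) :=
        (measure_mono hcover).trans (measure_biUnion_finset_le _ _)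
    _ = ENNReal.ofReal ((2 * N + 1) * (2 * (ε / |a|))) := by
        simp only [Real.volume_ball, Finset.sum_const, nsmul_eq_mul]
        rw [← hcard, ← ENNReal.ofReal_natCast, ← ENNReal.ofReal_mul (Nat.cast_nonneg _)]
    _ ≤ _ := by
        gcongr
        exact Nat.floor_le (by positivity)

lemma volume_Icc_inter_nearMultiples_two_pi_le {a ν₀ D₀ ν D M : ℝ} (hν₀ : 0 < ν₀)
    (hD₀ : 1 ≤ D₀) (hdio : ν₀ / D₀ ≤ |a|) (hν : 0 < ν) (hνD : ν ≤ D) (hM : 0 ≤ M) :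
    volume (Icc (-M) M ∩ nearMultiples a (2 * π) (ν / D))
      ≤ ENNReal.ofReal ((2 * M + 4 / ν₀) * ν * (D₀ / D)) := by
  have hD : 0 < D := hν.trans_le hνD
  have ha : 0 < |a| := (div_pos hν₀ (by linarith)).trans_le hdio
  have hε1 : ν / D ≤ 1 := (div_le_one hD).2 hνD
  have hεr : ν / D ≤ ν * (D₀ / D) := by
    rw [mul_div_assoc']; gcongr; exact le_mul_of_one_le_right hν.le hD₀
  have hεa : ν / D / |a| ≤ ν * (D₀ / D) / ν₀ := by
    have hν₀a : ν₀ ≤ D₀ * |a| := by rwa [div_le_iff₀ (by linarith), mul_comm] at hdio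
    rw [div_le_div_iff₀ ha hν₀]
    calc ν / D * ν₀ ≤ ν / D * (D₀ * |a|) := by gcongr
      _ = ν * (D₀ / D) * |a| := by ring
  have hcount : 2 * ((M * |a| + ν / D) / (2 * π)) + 1 ≤ M * |a| + 2 := by
    rw [mul_div_assoc', mul_div_mul_left _ _ two_ne_zero]
    have := div_le_self (by positivity : 0 ≤ M * |a| + ν / D)
      (by linarith [Real.pi_gt_three] : (1 : ℝ) ≤ π)
    linarith
  refine (volume_Icc_inter_nearMultiples_le (abs_pos.1 ha) (by positivity) (by positivity)
    hM).trans (ENNReal.ofReal_le_ofReal ?_)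
  calc (2 * ((M * |a| + ν / D) / (2 * π)) + 1) * (2 * (ν / D / |a|))
      ≤ (M * |a| + 2) * (2 * (ν / D / |a|)) := by gcongr
    _ = 2 * M * (ν / D) + 4 * (ν / D / |a|) := by field_simp; ring
    _ ≤ 2 * M * (ν * (D₀ / D)) + 4 * (ν * (D₀ / D) / ν₀) := by gcongr
    _ = (2 * M + 4 / ν₀) * ν * (D₀ / D) := by ring

lemma eq_zero_of_forall_le_ofReal_mul {x : ENNReal} {C : ℝ}
    (h : ∀ ν : ℝ, 0 < ν → ν ≤ 1 → x ≤ ENNReal.ofReal (C * ν)) : x = 0 := by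
  have hlim : Tendsto (fun ν : ℝ => ENNReal.ofReal (C * ν)) (𝓝[>] 0) (𝓝 0) := by
    simpa using ENNReal.tendsto_ofReal
      (((continuous_const_mul C).tendsto' 0 0 (mul_zero C)).mono_left nhdsWithin_le_nhds)
  refine nonpos_iff_eq_zero.1 (ge_of_tendsto hlim ?_)
  filter_upwards [Ioc_mem_nhdsGT one_pos] with ν hν using h ν hν.1 hν.2

lemma volume_Icc_inter_iUnion_nearMultiples_le {α : ℕ → ℝ} {ν₀ τ₀ τ ν M : ℝ} (hν₀ : 0 < ν₀)
    (hτ₀ : 0 ≤ 1 + τ₀) (hτ : τ₀ + 1 < τ)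
    (hdio : ∀ k : ℕ →₀ ℤ, k ≠ 0 → ν₀ / dprod τ₀ k ≤ |adot α k|)
    (hν : 0 < ν) (hν1 : ν ≤ 1) (hM : 0 ≤ M) :
    volume (Icc (-M) M ∩ ⋃ (k : ℕ →₀ ℤ) (_ : k ≠ 0),
        nearMultiples (adot α k) (2 * π) (ν / dprod τ k))
      ≤ ENNReal.ofReal ((2 * M + 4 / ν₀) * ν * ∑' k, dprod τ₀ k / dprod τ k) := by
  have hsum := summable_dprod_div_dprod hτ₀ hτ
  have hterm (k : ℕ →₀ ℤ) : volume (Icc (-M) M ∩ ⋃ (_ : k ≠ 0),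
      nearMultiples (adot α k) (2 * π) (ν / dprod τ k))
      ≤ ENNReal.ofReal ((2 * M + 4 / ν₀) * ν * (dprod τ₀ k / dprod τ k)) := by
    by_cases hk : k = 0
    · simp [hk]
    · simpa [hk] using volume_Icc_inter_nearMultiples_two_pi_le hν₀ (one_le_dprod τ₀ k)
        (hdio k hk) hν (hν1.trans (one_le_dprod τ k)) hM
  rw [inter_iUnion, ← tsum_mul_left, ENNReal.ofReal_tsum_of_nonneg
    (fun k => by have := dprod_pos τ₀ k; have := dprod_pos τ k; positivity) (hsum.mul_left _)]
  exact (measure_iUnion_le _).trans (ENNReal.tsum_le_tsum hterm)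

theorem stmt0_general (α : ℕ → ℝ)
    (ν₀ τ₀ : ℝ) (hν₀ : 0 < ν₀) (hτ₀ : 0 < τ₀)
    (hdio : ∀ k : ℕ →₀ ℤ, k ≠ 0 → ν₀ / dprod τ₀ k ≤ |adot α k|)
    (τ : ℝ) (hτ : τ₀ + 1 < τ) :
    MeasureTheory.volume
      ({ω : ℝ | ∃ ν > (0 : ℝ), ∀ k : ℕ →₀ ℤ, k ≠ 0 → ∀ n : ℤ,
          ν / dprod τ k ≤ |ω * adot α k - 2 * (n : ℝ) * Real.pi|}ᶜ) = 0 := by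
  set resonant := fun ν : ℝ => ⋃ (k : ℕ →₀ ℤ) (_ : k ≠ 0),
    nearMultiples (adot α k) (2 * π) (ν / dprod τ k)
  have hcover : {ω : ℝ | ∃ ν > (0 : ℝ), ∀ k : ℕ →₀ ℤ, k ≠ 0 → ∀ n : ℤ,
      ν / dprod τ k ≤ |ω * adot α k - 2 * (n : ℝ) * Real.pi|}ᶜ
      ⊆ ⋃ M : ℕ, Icc (-(M : ℝ)) M ∩ ⋂ ν > 0, resonant ν := by
    intro ω hω
    simp only [mem_compl_iff, mem_ofPred_eq] at hω
    push Not at hω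
    refine mem_iUnion.2 ⟨⌈|ω|⌉₊, abs_le.1 (Nat.le_ceil _), mem_iInter₂.2 fun ν hν => ?_⟩
    obtain ⟨k, hk, n, hn⟩ := hω ν hν
    exact mem_biUnion hk ⟨n, by rwa [mul_comm 2 (n : ℝ), mul_assoc] at hn⟩
  refine measure_mono_null hcover (measure_iUnion_null fun M => ?_)
  refine eq_zero_of_forall_le_ofReal_mul (C := (2 * M + 4 / ν₀) * ∑' k, dprod τ₀ k / dprod τ k)
    fun ν hν hν1 => ?_
  calc volume (Icc (-(M : ℝ)) M ∩ ⋂ ν > 0, resonant ν)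
      ≤ volume (Icc (-(M : ℝ)) M ∩ resonant ν) :=
        measure_mono (inter_subset_inter_right _ (biInter_subset_of_mem hν))
    _ ≤ _ := volume_Icc_inter_iUnion_nearMultiples_le hν₀ (by linarith) hτ hdio hν hν1
        M.cast_nonneg
    _ = _ := by ring_nf

/-- if `α ∈ [0,1]^ℕ` is rationally independent and satisfies the
infinite-dimensional Diophantine condition with constants `ν₀, τ₀`, and `τ > τ₀ + 1`,
then the set `𝒟(τ;α) = ∪_{ν>0} 𝒟(ν,τ;α)` of `ω` with
`|ω α·k − 2nπ| ≥ ν / ∏_j (1+⟨⟨j⟩⟩^{1+τ}|k_j|^{1+τ})` for all nonzero finitely supported `k`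
and all `n ∈ ℤ`, has full Lebesgue measure in `ℝ`. -/
theorem stmt0 (α : ℕ → ℝ) (hα : ∀ j, α j ∈ Set.Icc (0 : ℝ) 1)
    (hindep : ∀ k : ℕ →₀ ℤ, k ≠ 0 → adot α k ≠ 0)
    (ν₀ τ₀ : ℝ) (hν₀ : 0 < ν₀) (hτ₀ : 0 < τ₀)
    (hdio : ∀ k : ℕ →₀ ℤ, k ≠ 0 → ν₀ / dprod τ₀ k ≤ |adot α k|)
    (τ : ℝ) (hτ : τ₀ + 1 < τ) :
    MeasureTheory.volume
      ({ω : ℝ | ∃ ν > (0 : ℝ), ∀ k : ℕ →₀ ℤ, k ≠ 0 → ∀ n : ℤ,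
          ν / dprod τ k ≤ |ω * adot α k - 2 * (n : ℝ) * Real.pi|}ᶜ) = 0 :=
  stmt0_general α ν₀ τ₀ hν₀ hτ₀ hdio τ hτ
end

section
/- Composition estimate for multi-site interactions: let ĥ ∈ 𝒜_ρ and Ĥ be analytic on (𝕋^ℕ_{ρ+‖ĥ‖_ρ})^{L+1} with ‖Ĥ‖_{L,ρ+‖ĥ‖_ρ} < ∞. Define Ψ[ĥ](σ) = Ĥ(σ + ĥ(σ)α, σ + ωα + ĥ(σ+ωα)α, …, σ + Lωα + ĥ(σ+Lωα)α). Then Ψ[ĥ] ∈ 𝒜_ρ and ‖Ψ[ĥ]‖_ρ ≤ ‖Ĥ‖_{L, ρ + ‖ĥ‖_ρ}. -/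
open MeasureTheory Complex

/-- Norm `‖Ĥ‖_{L,R} = ∑_{(k₀,…,k_L)} |Ĥ(k₀,…,k_L)| e^{R ∑_j |k_j|_s}` for a multi-site
interaction given by its Fourier coefficients. -/
noncomputable def hlnorm (L : ℕ) (R s : ℝ) (cH : (Fin (L + 1) → (ℕ →₀ ℤ)) → ℂ) :
    ENNReal :=
  ∑' K : Fin (L + 1) → (ℕ →₀ ℤ),
    (‖cH K‖₊ : ENNReal) * ENNReal.ofReal (Real.exp (R * ∑ j, swt s (K j)))

/-- Evaluation of a multi-site interaction at `L+1` (complexified) torus points. -/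
noncomputable def meval (L : ℕ) (cH : (Fin (L + 1) → (ℕ →₀ ℤ)) → ℂ)
    (v : Fin (L + 1) → ℕ → ℂ) : ℂ :=
  ∑' K : Fin (L + 1) → (ℕ →₀ ℤ), cH K * Complex.exp (Complex.I * ∑ j, cdot (K j) (v j))

/-- The composition operator
`Ψ[ĥ](σ) = Ĥ(σ + ĥ(σ)α, σ + ωα + ĥ(σ+ωα)α, …, σ + Lωα + ĥ(σ+Lωα)α)`. -/
noncomputable def psiOp (L : ℕ) (ω : ℝ) (α : ℕ → ℝ)
    (cH : (Fin (L + 1) → (ℕ →₀ ℤ)) → ℂ) (h : (ℕ →₀ ℤ) → ℂ) (σ : ℕ → ℂ) : ℂ :=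
  meval L cH (fun j => fun m =>
    σ m + ((j : ℕ) : ℂ) * ω * α m +
      (α m : ℂ) * aeval h (fun m' => σ m' + ((j : ℕ) : ℂ) * ω * α m'))

/-!
Expand every factor `exp (i (α·K_j) ĥ(σ + jωα))` of `Ψ[ĥ](σ)` in its power series and every
power of `ĥ` in its Fourier series. This writes `Ψ[ĥ](σ)` as a sum of exponentials
`e^{i m·σ}` indexed by a mode `K` of `Ĥ` together with, at each site, an order `n` and `n`
modes of `ĥ`; collecting the terms with equal `m` gives the Fourier coefficients of `Ψ[ĥ]`.
Since `|α·K_j| ≤ |K_j|_s` and `|·|_s` is subadditive, the weighted norms of the terms are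
bounded by a family whose sum, computed in `ℝ≥0∞` (so that Tonelli holds without summability
side conditions), is `∑_K |Ĥ_K| e^{ρ ∑_j |K_j|_s} ∏_j e^{‖ĥ‖_ρ |K_j|_s} = ‖Ĥ‖_{L, ρ+‖ĥ‖_ρ}`.
The same bound gives the absolute convergence that justifies every rearrangement.
-/

open scoped ENNReal

lemma one_le_jwt_rpow {s : ℝ} (hs : 0 ≤ s) (j : ℕ) : 1 ≤ jwt j ^ s :=
  Real.one_le_rpow (le_max_right _ _) hs

lemma jwt_rpow_nonneg (s : ℝ) (j : ℕ) : 0 ≤ jwt j ^ s :=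
  Real.rpow_nonneg (zero_le_one.trans (le_max_right _ _)) s

lemma swt_eq_sum_of_support_subset (s : ℝ) (k : ℕ →₀ ℤ) {T : Finset ℕ} (hT : k.support ⊆ T) :
    swt s k = ∑ j ∈ T, jwt j ^ s * |(k j : ℝ)| :=
  Finset.sum_subset hT fun j _ hj => by simp [Finsupp.notMem_support_iff.mp hj]

lemma swt_nonneg (s : ℝ) (k : ℕ →₀ ℤ) : 0 ≤ swt s k :=
  Finset.sum_nonneg fun j _ => mul_nonneg (jwt_rpow_nonneg s j) (abs_nonneg _)

lemma swt_add_le (s : ℝ) (k k' : ℕ →₀ ℤ) : swt s (k + k') ≤ swt s k + swt s k' := by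
  rw [swt_eq_sum_of_support_subset s (k + k') Finsupp.support_add,
    swt_eq_sum_of_support_subset s k Finset.subset_union_left,
    swt_eq_sum_of_support_subset s k' Finset.subset_union_right, ← Finset.sum_add_distrib]
  gcongr with j
  rw [← mul_add]
  gcongr
  · exact jwt_rpow_nonneg s j
  · push_cast [Finsupp.add_apply]
    exact abs_add_le _ _

lemma swt_sum_le (s : ℝ) {ι : Type*} (t : Finset ι) (f : ι → ℕ →₀ ℤ) :
    swt s (∑ i ∈ t, f i) ≤ ∑ i ∈ t, swt s (f i) :=
  Finset.le_sum_of_subadditive (swt s) (by simp [swt]) (swt_add_le s) t f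

lemma abs_adot_le_swt {s : ℝ} (hs : 0 ≤ s) {α : ℕ → ℝ} (hα : ∀ j, α j ∈ Set.Icc (0 : ℝ) 1)
    (k : ℕ →₀ ℤ) : |adot α k| ≤ swt s k := by
  refine (Finset.abs_sum_le_sum_abs _ _).trans (Finset.sum_le_sum fun j _ => ?_)
  rw [abs_mul, abs_of_nonneg (hα j).1]
  exact mul_le_mul_of_nonneg_right ((hα j).2.trans (one_le_jwt_rpow hs j)) (abs_nonneg _)

lemma cdot_eq_sum_of_support_subset (k : ℕ →₀ ℤ) (σ : ℕ → ℂ) {T : Finset ℕ}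
    (hT : k.support ⊆ T) : cdot k σ = ∑ j ∈ T, (k j : ℂ) * σ j :=
  Finset.sum_subset hT fun j _ hj => by simp [Finsupp.notMem_support_iff.mp hj]

lemma cdot_add (k k' : ℕ →₀ ℤ) (σ : ℕ → ℂ) : cdot (k + k') σ = cdot k σ + cdot k' σ := by
  rw [cdot_eq_sum_of_support_subset (k + k') σ Finsupp.support_add,
    cdot_eq_sum_of_support_subset k σ Finset.subset_union_left,
    cdot_eq_sum_of_support_subset k' σ Finset.subset_union_right, ← Finset.sum_add_distrib]
  refine Finset.sum_congr rfl fun j _ => ?_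
  push_cast [Finsupp.add_apply]
  ring

lemma cdot_sum {ι : Type*} (t : Finset ι) (f : ι → ℕ →₀ ℤ) (σ : ℕ → ℂ) :
    cdot (∑ i ∈ t, f i) σ = ∑ i ∈ t, cdot (f i) σ :=
  map_sum (AddMonoidHom.mk' (cdot · σ) fun k k' => cdot_add k k' σ) f t

lemma cdot_add_mul_ofReal (k : ℕ →₀ ℤ) (σ : ℕ → ℂ) (c : ℂ) (β : ℕ → ℝ) :
    cdot k (fun m => σ m + c * β m) = cdot k σ + c * adot β k := by
  simp only [cdot, adot, mul_add, Finset.sum_add_distrib]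
  push_cast
  rw [Finset.mul_sum]
  congr 1
  exact Finset.sum_congr rfl fun j _ => by ring

lemma norm_exp_I_mul (z : ℂ) : ‖exp (I * z)‖ = Real.exp (-z.im) := by
  simp [Complex.norm_exp, Complex.mul_re]

lemma norm_exp_I_cdot_le {ρ s : ℝ} {σ : ℕ → ℂ} (hσ : σ ∈ Strip ρ s)
    (k : ℕ →₀ ℤ) : ‖exp (I * cdot k σ)‖ ≤ Real.exp (ρ * swt s k) := by
  rw [norm_exp_I_mul, Real.exp_le_exp, swt, Finset.mul_sum, cdot, Complex.im_sum,
    ← Finset.sum_neg_distrib]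
  refine Finset.sum_le_sum fun j _ => ?_
  calc -((k j : ℂ) * σ j).im = -((k j : ℝ) * (σ j).im) := by simp
    _ ≤ |(k j : ℝ)| * |(σ j).im| := by rw [← abs_mul]; exact neg_le_abs _
    _ ≤ |(k j : ℝ)| * (ρ * jwt j ^ s) := by gcongr; exact hσ j
    _ = ρ * (jwt j ^ s * |(k j : ℝ)|) := by ring

lemma add_ofReal_mem_strip {ρ s : ℝ} {σ : ℕ → ℂ} (hσ : σ ∈ Strip ρ s) (t : ℕ → ℝ) :
    (fun m => σ m + t m) ∈ Strip ρ s := fun j => by simpa using hσ j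

lemma summable_norm_mul_of_tsum_ne_top {ι E : Type*} [SeminormedAddCommGroup E] {f : ι → E}
    {w : ι → ℝ} (hw : ∀ i, 0 ≤ w i)
    (hf : ∑' i, (‖f i‖₊ : ℝ≥0∞) * ENNReal.ofReal (w i) ≠ ⊤) :
    Summable fun i => ‖f i‖ * w i := by
  refine (ENNReal.summable_toReal hf).congr fun i => ?_
  rw [ENNReal.toReal_mul, ENNReal.toReal_ofReal (hw i), ENNReal.coe_toReal, coe_nnnorm]

theorem ENNReal.tsum_fin_pi_prod {N : ℕ} {Γ : Type*} (g : Fin N → Γ → ℝ≥0∞) :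
    ∑' T : Fin N → Γ, ∏ j, g j (T j) = ∏ j, ∑' x, g j x := by
  induction N with
  | zero => simp
  | succ N ih =>
    rw [← (Fin.consEquiv fun _ => Γ).tsum_eq, ENNReal.tsum_prod', Fin.prod_univ_succ,
      ← ih fun j => g j.succ, ← ENNReal.tsum_mul_right]
    refine tsum_congr fun x => ?_
    rw [← ENNReal.tsum_mul_left]
    simp [Fin.consEquiv, Fin.prod_univ_succ]

theorem hasSum_fin_pi_prod {R : Type*} [NormedCommRing R] [CompleteSpace R] {N : ℕ} {Γ : Type*}
    (f : Fin N → Γ → R) (hf : ∀ j, Summable fun x => ‖f j x‖) :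
    HasSum (fun T : Fin N → Γ => ∏ j, f j (T j)) (∏ j, ∑' x, f j x) ∧
      Summable fun T : Fin N → Γ => ‖∏ j, f j (T j)‖ := by
  induction N with
  | zero =>
    simp only [Finset.univ_eq_empty, Finset.prod_empty]
    exact ⟨by simp, .of_finite⟩
  | succ N ih =>
    obtain ⟨hasSum_tail, summable_tail⟩ := ih (fun j => f j.succ) fun j => hf j.succ
    have hsplit (p : Γ × (Fin N → Γ)) :
        ∏ j, f j (Fin.consEquiv (fun _ => Γ) p j) = f 0 p.1 * ∏ j : Fin N, f j.succ (p.2 j) := by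
      simp [Fin.consEquiv, Fin.prod_univ_succ]
    have hnorm : Summable fun p : Γ × (Fin N → Γ) => ‖f 0 p.1 * ∏ j : Fin N, f j.succ (p.2 j)‖ :=
      Summable.mul_norm (g := fun T : Fin N → Γ => ∏ j : Fin N, f j.succ (T j)) (hf 0) summable_tail
    rw [← (Fin.consEquiv fun _ => Γ).hasSum_iff, ← (Fin.consEquiv fun _ => Γ).summable_iff,
      Fin.prod_univ_succ]
    simp only [Function.comp_def, hsplit]
    exact ⟨HasSum.mul (g := fun T : Fin N → Γ => ∏ j : Fin N, f j.succ (T j))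
      (hf 0).of_norm.hasSum hasSum_tail hnorm.of_norm, hnorm⟩

theorem ENNReal.tsum_sigma_pow_div_factorial_mul_prod {Γ : Type*} {x B : ℝ} (hx : 0 ≤ x)
    (hB : 0 ≤ B) {w : Γ → ℝ≥0∞} (hw : ∑' k, w k = ENNReal.ofReal B) :
    ∑' γ : Σ n, Fin n → Γ, ENNReal.ofReal (x ^ γ.1 / γ.1.factorial) * ∏ i, w (γ.2 i)
      = ENNReal.ofReal (Real.exp (x * B)) := by
  have hexp := NormedSpace.expSeries_div_hasSum_exp (x * B)
  rw [← Real.exp_eq_exp_ℝ] at hexp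
  rw [ENNReal.tsum_sigma', ← hexp.tsum_eq,
    ENNReal.ofReal_tsum_of_nonneg (fun n => by positivity) hexp.summable]
  refine tsum_congr fun n => ?_
  dsimp only
  rw [ENNReal.tsum_mul_left, ENNReal.tsum_fin_pi_prod (fun _ => w), Finset.prod_const,
    Finset.card_fin, hw, ← ENNReal.ofReal_pow hB, ← ENNReal.ofReal_mul (by positivity)]
  ring_nf

theorem hasSum_sigma_pow_div_factorial_mul_prod {𝕂 : Type*} [RCLike 𝕂] {Γ : Type*} {g : Γ → 𝕂}
    (hg : Summable fun k => ‖g k‖) (z : 𝕂) :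
    HasSum (fun γ : Σ n, Fin n → Γ => z ^ γ.1 / γ.1.factorial * ∏ i, g (γ.2 i))
        (NormedSpace.exp (z * ∑' k, g k)) ∧
      Summable fun γ : Σ n, Fin n → Γ => ‖z ^ γ.1 / γ.1.factorial * ∏ i, g (γ.2 i)‖ := by
  have hnorm : Summable fun γ : Σ n, Fin n → Γ => ‖z ^ γ.1 / γ.1.factorial * ∏ i, g (γ.2 i)‖ := by
    have hfin := ENNReal.tsum_sigma_pow_div_factorial_mul_prod (norm_nonneg z)
      (tsum_nonneg fun k => norm_nonneg (g k)) (ENNReal.ofReal_tsum_of_nonneg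
        (fun k => norm_nonneg (g k)) hg).symm
    refine (ENNReal.summable_toReal (hfin ▸ ENNReal.ofReal_ne_top)).congr fun γ => ?_
    rw [← ENNReal.ofReal_prod_of_nonneg fun i _ => norm_nonneg _,
      ← ENNReal.ofReal_mul (by positivity), ENNReal.toReal_ofReal (by positivity)]
    simp [norm_prod]
  have hfiber (n : ℕ) : HasSum (fun κ : Fin n → Γ => z ^ n / n.factorial * ∏ i, g (κ i))
      ((z * ∑' k, g k) ^ n / n.factorial) := by
    rw [show (z * ∑' k, g k) ^ n / n.factorial = z ^ n / n.factorial * ∏ _i : Fin n, ∑' k, g k by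
      rw [Finset.prod_const, Finset.card_fin, mul_pow]; ring]
    exact (hasSum_fin_pi_prod (fun _ : Fin n => g) fun _ => hg).1.mul_left _
  have htotal := hnorm.of_norm.hasSum
  rw [(htotal.sigma hfiber).unique (NormedSpace.expSeries_div_hasSum_exp _)] at htotal
  exact ⟨htotal, hnorm⟩

noncomputable def fiberSum {ι : Type*} (a : ι → ℂ) (M : ι → ℕ →₀ ℤ) (m : ℕ →₀ ℤ) : ℂ :=
  ∑' p : {p // M p = m}, a p

lemma hasCoeffsOn_fiberSum {ι : Type*} {ρ s : ℝ} {a : ι → ℂ} {M : ι → ℕ →₀ ℤ}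
    {F : (ℕ → ℂ) → ℂ} (ha : Summable fun p => ‖a p‖)
    (hF : ∀ σ ∈ Strip ρ s, HasSum (fun p => a p * exp (I * cdot (M p) σ)) (F σ)) :
    HasCoeffsOn ρ s F (fiberSum a M) := by
  intro σ hσ
  have hfiber (m : ℕ →₀ ℤ) : HasSum (fun p : {p // M p = m} => a p * exp (I * cdot (M p) σ))
      (fiberSum a M m * exp (I * cdot m σ)) := by
    have hsub : Summable fun p : {p // M p = m} => a p :=
      ha.of_norm.comp_injective Subtype.val_injective
    have hmode : (fun p : {p // M p = m} => a p * exp (I * cdot (M p) σ))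
        = fun p : {p // M p = m} => a p * exp (I * cdot m σ) := funext fun p => by rw [p.2]
    exact hmode ▸ hsub.hasSum.mul_right _
  exact ((Equiv.sigmaFiberEquiv M).hasSum_iff.mpr (hF σ hσ)).sigma hfiber

lemma anorm_fiberSum_le {ι : Type*} (ρ s : ℝ) (a : ι → ℂ) (M : ι → ℕ →₀ ℤ) :
    anorm ρ s (fiberSum a M)
      ≤ ∑' p, (‖a p‖₊ : ℝ≥0∞) * ENNReal.ofReal (Real.exp (ρ * swt s (M p))) := by
  rw [← (Equiv.sigmaFiberEquiv M).tsum_eq, ENNReal.tsum_sigma']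
  refine ENNReal.tsum_le_tsum fun m => ?_
  calc (‖fiberSum a M m‖₊ : ℝ≥0∞) * ENNReal.ofReal (Real.exp (ρ * swt s m))
      ≤ (∑' p : {p // M p = m}, (‖a p‖₊ : ℝ≥0∞)) * ENNReal.ofReal (Real.exp (ρ * swt s m)) := by
        gcongr
        simpa only [fiberSum, enorm_eq_nnnorm] using
          enorm_tsum_le_tsum_enorm (f := fun p : {p // M p = m} => a p)
    _ = _ := by
        rw [← ENNReal.tsum_mul_right]
        exact tsum_congr fun p => by rw [Equiv.sigmaFiberEquiv_apply, p.2]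

noncomputable def tupleSum (γ : Σ n, Fin n → ℕ →₀ ℤ) : ℕ →₀ ℤ := ∑ i, γ.2 i

/-- The coefficient of `e^{i (k + ∑ κ)·σ}` in the expansion of `e^{i k·u} exp (i (α·k) ĥ(u))`
at `u = σ + tα`; the phase comes from the shift by `tα`. -/
noncomputable def siteCoeff (α : ℕ → ℝ) (h : (ℕ →₀ ℤ) → ℂ) (t : ℝ) (k : ℕ →₀ ℤ)
    (γ : Σ n, Fin n → ℕ →₀ ℤ) : ℂ :=
  (I * adot α k) ^ γ.1 / γ.1.factorial * (∏ i, h (γ.2 i)) *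
    exp (I * (t * adot α (k + tupleSum γ)))

lemma exp_I_cdot_add_tupleSum (k : ℕ →₀ ℤ) (γ : Σ n, Fin n → ℕ →₀ ℤ) (u : ℕ → ℂ) :
    exp (I * cdot (k + tupleSum γ) u) = exp (I * cdot k u) * ∏ i, exp (I * cdot (γ.2 i) u) := by
  rw [cdot_add, tupleSum, cdot_sum, mul_add, Finset.mul_sum, exp_add, exp_sum]

lemma hasSum_siteCoeff_mul_exp {ρ s : ℝ} {α : ℕ → ℝ} {h : (ℕ →₀ ℤ) → ℂ}
    (hh : Summable fun k => ‖h k‖ * Real.exp (ρ * swt s k)) {σ : ℕ → ℂ} (hσ : σ ∈ Strip ρ s)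
    (t : ℝ) (k : ℕ →₀ ℤ) :
    HasSum (fun γ => siteCoeff α h t k γ * exp (I * cdot (k + tupleSum γ) σ))
        (exp (I * cdot k fun m =>
          σ m + t * α m + α m * aeval h fun m' => σ m' + t * α m')) ∧
      Summable fun γ => ‖siteCoeff α h t k γ * exp (I * cdot (k + tupleSum γ) σ)‖ := by
  set u : ℕ → ℂ := fun m => σ m + t * α m
  have hu : u ∈ Strip ρ s := by simpa using add_ofReal_mem_strip hσ fun m => t * α m
  set g : (ℕ →₀ ℤ) → ℂ := fun k' => h k' * exp (I * cdot k' u)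
  have hg : Summable fun k' => ‖g k'‖ := hh.of_nonneg_of_le (fun _ => norm_nonneg _) fun k' => by
    rw [norm_mul]; gcongr; exact norm_exp_I_cdot_le hu k'
  obtain ⟨hsum, hnorm⟩ := hasSum_sigma_pow_div_factorial_mul_prod hg (I * adot α k)
  have hterm (γ : Σ n, Fin n → ℕ →₀ ℤ) : siteCoeff α h t k γ * exp (I * cdot (k + tupleSum γ) σ)
      = exp (I * cdot k u) * ((I * adot α k) ^ γ.1 / γ.1.factorial * ∏ i, g (γ.2 i)) := by
    have hexp : exp (I * cdot k u) * ∏ i, exp (I * cdot (γ.2 i) u)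
        = exp (I * (t * adot α (k + tupleSum γ))) * exp (I * cdot (k + tupleSum γ) σ) := by
      rw [← exp_I_cdot_add_tupleSum, cdot_add_mul_ofReal, mul_add, exp_add, mul_comm]
    calc siteCoeff α h t k γ * exp (I * cdot (k + tupleSum γ) σ)
        = (I * adot α k) ^ γ.1 / γ.1.factorial * (∏ i, h (γ.2 i)) *
            (exp (I * cdot k u) * ∏ i, exp (I * cdot (γ.2 i) u)) := by
          rw [hexp, siteCoeff]; ring
      _ = _ := by simp only [g, Finset.prod_mul_distrib]; ring
  have hvalue : exp (I * cdot k u) * NormedSpace.exp (I * adot α k * ∑' k', g k')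
      = exp (I * cdot k fun m => σ m + t * α m + α m * aeval h fun m' => σ m' + t * α m') := by
    rw [← Complex.exp_eq_exp_ℂ, ← exp_add, mul_assoc, ← mul_add]
    congr 2
    calc cdot k u + adot α k * ∑' k', g k' = cdot k u + aeval h u * adot α k := by
          rw [mul_comm]; rfl
      _ = cdot k fun m => u m + aeval h u * α m := (cdot_add_mul_ofReal k u _ α).symm
      _ = _ := by simp only [u, mul_comm (aeval h _)]
  refine ⟨?_, ?_⟩
  · rw [← hvalue, funext hterm]
    exact hsum.mul_left _
  · refine (hnorm.mul_left ‖exp (I * cdot k u)‖).congr fun γ => ?_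
    rw [hterm, ← norm_mul]

/-- `(K, T)`: `K` is a mode of `Ĥ`, and `T j = ⟨n, κ⟩` selects at site `j` the term
`(i α·K_j)ⁿ / n! · ĥ_{κ 0} ⋯ ĥ_{κ (n-1)}` of the expansion of `exp (i (α·K_j) ĥ)`. -/
abbrev ExpansionIndex (L : ℕ) : Type :=
  (Fin (L + 1) → ℕ →₀ ℤ) × (Fin (L + 1) → Σ n, Fin n → ℕ →₀ ℤ)

noncomputable def expansionMode {L : ℕ} (p : ExpansionIndex L) : ℕ →₀ ℤ :=
  ∑ j, (p.1 j + tupleSum (p.2 j))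

noncomputable def expansionCoeff (L : ℕ) (ω : ℝ) (α : ℕ → ℝ) (cH : (Fin (L + 1) → ℕ →₀ ℤ) → ℂ)
    (h : (ℕ →₀ ℤ) → ℂ) (p : ExpansionIndex L) : ℂ :=
  cH p.1 * ∏ j : Fin (L + 1), siteCoeff α h ((j : ℕ) * ω) (p.1 j) (p.2 j)

section Expansion

variable {ρ s ω : ℝ} {α : ℕ → ℝ} {L : ℕ} {cH : (Fin (L + 1) → ℕ →₀ ℤ) → ℂ}
  {h : (ℕ →₀ ℤ) → ℂ}

lemma hasSum_expansionCoeff_mul_exp_fiber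
    (hh : Summable fun k => ‖h k‖ * Real.exp (ρ * swt s k)) {σ : ℕ → ℂ} (hσ : σ ∈ Strip ρ s)
    (K : Fin (L + 1) → ℕ →₀ ℤ) :
    HasSum (fun T => expansionCoeff L ω α cH h (K, T) * exp (I * cdot (expansionMode (K, T)) σ))
      (cH K * exp (I * ∑ j : Fin (L + 1), cdot (K j) fun m =>
        σ m + ((j : ℕ) : ℂ) * ω * α m +
          (α m : ℂ) * aeval h fun m' => σ m' + ((j : ℕ) : ℂ) * ω * α m')) := by
  have hsite (j : Fin (L + 1)) := hasSum_siteCoeff_mul_exp (α := α) hh hσ ((j : ℕ) * ω) (K j)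
  have hprod := ((hasSum_fin_pi_prod _ fun j => (hsite j).2).1).mul_left (cH K)
  simp only [fun j => (hsite j).1.tsum_eq] at hprod
  have hterm (T : Fin (L + 1) → Σ n, Fin n → ℕ →₀ ℤ) :
      expansionCoeff L ω α cH h (K, T) * exp (I * cdot (expansionMode (K, T)) σ)
        = cH K * ∏ j : Fin (L + 1), siteCoeff α h ((j : ℕ) * ω) (K j) (T j) *
            exp (I * cdot (K j + tupleSum (T j)) σ) := by
    rw [expansionCoeff, expansionMode, cdot_sum, Finset.mul_sum, exp_sum, mul_assoc,
      ← Finset.prod_mul_distrib]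
  rw [funext hterm, Finset.mul_sum, exp_sum]
  push_cast at hprod
  exact hprod

lemma hasSum_expansionCoeff_mul_exp (hh : Summable fun k => ‖h k‖ * Real.exp (ρ * swt s k))
    (hcoeff : Summable fun p =>
      ‖expansionCoeff L ω α cH h p‖ * Real.exp (ρ * swt s (expansionMode p)))
    {σ : ℕ → ℂ} (hσ : σ ∈ Strip ρ s) :
    HasSum (fun p => expansionCoeff L ω α cH h p * exp (I * cdot (expansionMode p) σ))
      (psiOp L ω α cH h σ) := by
  have hsum : Summable fun p => expansionCoeff L ω α cH h p * exp (I * cdot (expansionMode p) σ) :=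
    hcoeff.of_norm_bounded fun p => by
      rw [norm_mul]; gcongr; exact norm_exp_I_cdot_le hσ _
  have hfibers := hsum.hasSum.prod_fiberwise (hasSum_expansionCoeff_mul_exp_fiber hh hσ)
  rw [psiOp, meval, hfibers.tsum_eq]
  exact hsum.hasSum

end Expansion

noncomputable def siteMajorant (ρ s : ℝ) (h : (ℕ →₀ ℤ) → ℂ) (k : ℕ →₀ ℤ)
    (γ : Σ n, Fin n → ℕ →₀ ℤ) : ℝ :=
  swt s k ^ γ.1 / γ.1.factorial * ∏ i, ‖h (γ.2 i)‖ * Real.exp (ρ * swt s (γ.2 i))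

noncomputable def expansionMajorant (ρ s : ℝ) (L : ℕ) (cH : (Fin (L + 1) → ℕ →₀ ℤ) → ℂ)
    (h : (ℕ →₀ ℤ) → ℂ) (p : ExpansionIndex L) : ℝ :=
  ‖cH p.1‖ * Real.exp (ρ * ∑ j, swt s (p.1 j)) * ∏ j, siteMajorant ρ s h (p.1 j) (p.2 j)

section Majorant

variable {ρ s ω : ℝ} {α : ℕ → ℝ} {L : ℕ} {cH : (Fin (L + 1) → ℕ →₀ ℤ) → ℂ}
  {h : (ℕ →₀ ℤ) → ℂ}

lemma pow_swt_div_factorial_nonneg (s : ℝ) (k : ℕ →₀ ℤ) (n : ℕ) :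
    0 ≤ swt s k ^ n / n.factorial :=
  div_nonneg (pow_nonneg (swt_nonneg s k) n) (Nat.cast_nonneg _)

lemma siteMajorant_nonneg (k : ℕ →₀ ℤ) (γ : Σ n, Fin n → ℕ →₀ ℤ) :
    0 ≤ siteMajorant ρ s h k γ :=
  mul_nonneg (pow_swt_div_factorial_nonneg s k γ.1) (by positivity)

lemma norm_siteCoeff_le (hs : 0 ≤ s) (hα : ∀ j, α j ∈ Set.Icc (0 : ℝ) 1) (t : ℝ)
    (k : ℕ →₀ ℤ) (γ : Σ n, Fin n → ℕ →₀ ℤ) :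
    ‖siteCoeff α h t k γ‖ ≤ swt s k ^ γ.1 / γ.1.factorial * ∏ i, ‖h (γ.2 i)‖ := by
  have hphase : ‖exp (I * (t * adot α (k + tupleSum γ)))‖ = 1 := by
    rw [norm_exp_I_mul]; simp
  rw [siteCoeff, norm_mul, hphase, mul_one, norm_mul, norm_prod, norm_div, norm_pow, norm_mul,
    Complex.norm_I, one_mul, Complex.norm_real, Real.norm_eq_abs, Complex.norm_natCast]
  gcongr
  exact abs_adot_le_swt hs hα k

lemma swt_expansionMode_le (p : ExpansionIndex L) :
    swt s (expansionMode p) ≤ ∑ j, (swt s (p.1 j) + ∑ i, swt s ((p.2 j).2 i)) := by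
  refine (swt_sum_le s _ _).trans (Finset.sum_le_sum fun j _ => ?_)
  refine (swt_add_le s _ _).trans ?_
  gcongr
  exact swt_sum_le s _ _

lemma norm_expansionCoeff_mul_exp_le (hρ : 0 ≤ ρ) (hs : 0 ≤ s)
    (hα : ∀ j, α j ∈ Set.Icc (0 : ℝ) 1) (p : ExpansionIndex L) :
    ‖expansionCoeff L ω α cH h p‖ * Real.exp (ρ * swt s (expansionMode p))
      ≤ expansionMajorant ρ s L cH h p := by
  have hexp : Real.exp (ρ * swt s (expansionMode p))
      ≤ Real.exp (ρ * ∑ j, swt s (p.1 j)) * ∏ j, ∏ i, Real.exp (ρ * swt s ((p.2 j).2 i)) := by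
    simp only [← Real.exp_sum, ← Real.exp_add, Real.exp_le_exp]
    calc ρ * swt s (expansionMode p) ≤ ρ * ∑ j, (swt s (p.1 j) + ∑ i, swt s ((p.2 j).2 i)) :=
          mul_le_mul_of_nonneg_left (swt_expansionMode_le p) hρ
      _ = _ := by simp only [mul_add, Finset.mul_sum, Finset.sum_add_distrib]
  calc ‖expansionCoeff L ω α cH h p‖ * Real.exp (ρ * swt s (expansionMode p))
      ≤ (‖cH p.1‖ * ∏ j, (swt s (p.1 j) ^ (p.2 j).1 / (p.2 j).1.factorial *
            ∏ i, ‖h ((p.2 j).2 i)‖)) *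
          (Real.exp (ρ * ∑ j, swt s (p.1 j)) * ∏ j, ∏ i, Real.exp (ρ * swt s ((p.2 j).2 i))) := by
        have hsite (j : Fin (L + 1)) :=
          norm_siteCoeff_le (h := h) hs hα ((j : ℕ) * ω) (p.1 j) (p.2 j)
        rw [expansionCoeff, norm_mul, norm_prod]
        refine mul_le_mul (by gcongr with j; exact hsite j) hexp (Real.exp_pos _).le ?_
        exact mul_nonneg (norm_nonneg _)
          (Finset.prod_nonneg fun j _ => (norm_nonneg _).trans (hsite j))
    _ = expansionMajorant ρ s L cH h p := by
        simp only [expansionMajorant, siteMajorant, Finset.prod_mul_distrib]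
        ring

lemma tsum_ofReal_siteMajorant {B : ℝ} (hB : 0 ≤ B) (hh : anorm ρ s h = ENNReal.ofReal B)
    (k : ℕ →₀ ℤ) :
    ∑' γ, ENNReal.ofReal (siteMajorant ρ s h k γ) = ENNReal.ofReal (Real.exp (swt s k * B)) := by
  have hw : ∑' k', ENNReal.ofReal (‖h k'‖ * Real.exp (ρ * swt s k')) = ENNReal.ofReal B := by
    rw [← hh, anorm]
    refine tsum_congr fun k' => ?_
    rw [ENNReal.ofReal_mul (norm_nonneg _), ofReal_norm, enorm_eq_nnnorm]
  rw [← ENNReal.tsum_sigma_pow_div_factorial_mul_prod (swt_nonneg s k) hB hw]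
  refine tsum_congr fun γ => ?_
  rw [siteMajorant, ENNReal.ofReal_mul (pow_swt_div_factorial_nonneg s k γ.1),
    ENNReal.ofReal_prod_of_nonneg fun i _ => by positivity]

lemma tsum_ofReal_expansionMajorant {B : ℝ} (hB : 0 ≤ B) (hh : anorm ρ s h = ENNReal.ofReal B) :
    ∑' p, ENNReal.ofReal (expansionMajorant ρ s L cH h p) = hlnorm L (ρ + B) s cH := by
  rw [ENNReal.tsum_prod', hlnorm]
  refine tsum_congr fun K => ?_
  have hfactor (T : Fin (L + 1) → Σ n, Fin n → ℕ →₀ ℤ) :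
      ENNReal.ofReal (expansionMajorant ρ s L cH h (K, T))
        = ENNReal.ofReal (‖cH K‖ * Real.exp (ρ * ∑ j, swt s (K j))) *
            ∏ j, ENNReal.ofReal (siteMajorant ρ s h (K j) (T j)) := by
    rw [expansionMajorant, ENNReal.ofReal_mul (by positivity),
      ENNReal.ofReal_prod_of_nonneg fun j _ => siteMajorant_nonneg _ _]
  rw [tsum_congr hfactor, ENNReal.tsum_mul_left,
    ENNReal.tsum_fin_pi_prod fun j γ => ENNReal.ofReal (siteMajorant ρ s h (K j) γ)]
  simp only [tsum_ofReal_siteMajorant hB hh]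
  rw [← ENNReal.ofReal_prod_of_nonneg fun j _ => by positivity,
    ← ENNReal.ofReal_mul (by positivity), ← enorm_eq_nnnorm, ← ofReal_norm,
    ← ENNReal.ofReal_mul (norm_nonneg _), mul_assoc, ← Real.exp_sum, ← Real.exp_add,
    ← Finset.sum_mul, add_mul]
  ring_nf

lemma tsum_nnnorm_expansionCoeff_mul_exp_le (hρ : 0 ≤ ρ) (hs : 0 ≤ s)
    (hα : ∀ j, α j ∈ Set.Icc (0 : ℝ) 1) {B : ℝ} (hB : 0 ≤ B)
    (hh : anorm ρ s h = ENNReal.ofReal B) :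
    ∑' p, (‖expansionCoeff L ω α cH h p‖₊ : ℝ≥0∞) *
        ENNReal.ofReal (Real.exp (ρ * swt s (expansionMode p)))
      ≤ hlnorm L (ρ + B) s cH := by
  rw [← tsum_ofReal_expansionMajorant hB hh]
  refine ENNReal.tsum_le_tsum fun p => ?_
  rw [← enorm_eq_nnnorm, ← ofReal_norm, ← ENNReal.ofReal_mul (norm_nonneg _)]
  exact ENNReal.ofReal_le_ofReal (norm_expansionCoeff_mul_exp_le hρ hs hα p)

end Majorant

/-- composition estimate for multi-site interactions: if `ĥ ∈ 𝒜_ρ` and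
`Ĥ` has finite `‖·‖_{L, ρ+‖ĥ‖_ρ}` norm, then `Ψ[ĥ] ∈ 𝒜_ρ` with
`‖Ψ[ĥ]‖_ρ ≤ ‖Ĥ‖_{L, ρ+‖ĥ‖_ρ}`. -/
theorem stmt9 (ρ s ω : ℝ) (hρ : 0 < ρ) (hs : 0 < s)
    (α : ℕ → ℝ) (hα : ∀ j, α j ∈ Set.Icc (0 : ℝ) 1)
    (L : ℕ) (cH : (Fin (L + 1) → (ℕ →₀ ℤ)) → ℂ) (h : (ℕ →₀ ℤ) → ℂ)
    (hh : anorm ρ s h ≠ ⊤)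
    (hH : hlnorm L (ρ + (anorm ρ s h).toReal) s cH ≠ ⊤) :
    ∃ c : (ℕ →₀ ℤ) → ℂ,
      HasCoeffsOn ρ s (psiOp L ω α cH h) c ∧
      anorm ρ s c ≤ hlnorm L (ρ + (anorm ρ s h).toReal) s cH := by
  have hweighted := tsum_nnnorm_expansionCoeff_mul_exp_le (ω := ω) (cH := cH) hρ.le hs.le hα
    ENNReal.toReal_nonneg (ENNReal.ofReal_toReal hh).symm
  have hcoeff := summable_norm_mul_of_tsum_ne_top (fun _ => (Real.exp_pos _).le)
    (hweighted.trans_lt hH.lt_top).ne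
  have hh_summable := summable_norm_mul_of_tsum_ne_top (fun _ => (Real.exp_pos _).le) hh
  have hcoeff_norm : Summable fun p => ‖expansionCoeff L ω α cH h p‖ :=
    hcoeff.of_nonneg_of_le (fun _ => norm_nonneg _) fun p => le_mul_of_one_le_right
      (norm_nonneg _) (Real.one_le_exp (mul_nonneg hρ.le (swt_nonneg s _)))
  exact ⟨fiberSum (expansionCoeff L ω α cH h) expansionMode,
    hasCoeffsOn_fiberSum hcoeff_norm fun _ hσ =>
      hasSum_expansionCoeff_mul_exp hh_summable hcoeff hσ,
    (anorm_fiberSum_le ρ s _ _).trans hweighted⟩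
end

section
/- Bound on the transfer operators: for ω ∈ ℝ and α ∈ [0,1]^ℕ satisfying the Diophantine condition |ωα·k − 2mπ| ≥ ν/∏_j(1+⟨⟨j⟩⟩^{1+τ}|k_j|^{1+τ}), define 𝒮_n η̂(σ) = η̂(σ+nωα) − η̂(σ) and let 𝒮_{±1}^{-1} be the zero-average right inverse of 𝒮_{±1}. Then for each n ∈ ℤ, the operators ℒ_n^± = 𝒮_{±1}^{-1}𝒮_n : 𝒜_ρ → 𝒜⁰_ρ and ℛ_n^± = 𝒮_n 𝒮_{±1}^{-1} : 𝒜⁰_ρ → 𝒜⁰_ρ are bounded with operator norm at most |n|. -/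
open MeasureTheory Complex

lemma nat_bound (m : ℕ) (x : ℝ) :
    ‖Complex.exp (Complex.I * (m * x)) - 1‖ ≤ m * ‖Complex.exp (Complex.I * x) - 1‖ := by
  induction m with
  | zero => simp
  | succ m ih =>
    have key : Complex.exp (Complex.I * ((m+1 : ℕ) * x)) - 1
        = Complex.exp (Complex.I * (m * x)) * (Complex.exp (Complex.I * x) - 1)
          + (Complex.exp (Complex.I * (m * x)) - 1) := by
      rw [mul_sub, ← Complex.exp_add]
      push_cast
      ring_nf
    rw [key]
    have h1 : ‖Complex.exp (Complex.I * (m * x))‖ = 1 := by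
      rw [show Complex.I * (m * x) = (m * x : ℝ) * Complex.I by push_cast; ring]
      exact Complex.norm_exp_ofReal_mul_I _
    calc _ ≤ ‖Complex.exp (Complex.I * (m * x)) * (Complex.exp (Complex.I * x) - 1)‖
        + ‖Complex.exp (Complex.I * (m * x)) - 1‖ := norm_add_le _ _
      _ ≤ 1 * ‖Complex.exp (Complex.I * x) - 1‖ + m * ‖Complex.exp (Complex.I * x) - 1‖ := by
          rw [norm_mul, h1]; gcongr
      _ = (m + 1 : ℕ) * ‖Complex.exp (Complex.I * x) - 1‖ := by push_cast; ring

lemma neg_norm (x : ℝ) :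
    ‖Complex.exp (Complex.I * (-x : ℝ)) - 1‖ = ‖Complex.exp (Complex.I * x) - 1‖ := by
  have : Complex.exp (Complex.I * (-x : ℝ)) - 1
      = (starRingEnd ℂ) (Complex.exp (Complex.I * x) - 1) := by
    rw [map_sub, ← Complex.exp_conj, map_mul, Complex.conj_I, Complex.conj_ofReal, map_one]
    push_cast; ring_nf
  rw [this, RCLike.norm_conj]

lemma int_bound (n : ℤ) (x : ℝ) :
    ‖Complex.exp (Complex.I * ((n : ℝ) * x)) - 1‖ ≤ n.natAbs * ‖Complex.exp (Complex.I * x) - 1‖ := by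
  rcases le_or_gt 0 n with h | h
  · lift n to ℕ using h
    have := nat_bound n x
    simpa using this
  · have hm : ((-n).toNat : ℝ) = -(n : ℝ) := by
      have : ((-n).toNat : ℤ) = -n := Int.toNat_of_nonneg (by omega)
      have := congrArg (fun z : ℤ => (z : ℝ)) this
      push_cast at this; linarith
    have hx : ((n : ℝ) * x) = -(((-n).toNat : ℝ) * x) := by rw [hm]; ring
    rw [show (((n:ℝ):ℂ) * (x:ℂ)) = (((n : ℝ) * x : ℝ) : ℂ) by push_cast; ring, hx,
      neg_norm (((-n).toNat : ℝ) * x)]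
    have hn : ((-n).toNat : ℝ) = (n.natAbs : ℝ) := by
      rw [hm]; push_cast [Nat.cast_natAbs]; rw [abs_of_neg (by exact_mod_cast h)]
    have hb := nat_bound (-n).toNat x
    rw [hn] at hb
    calc ‖Complex.exp (Complex.I * ((((-n).toNat : ℝ) * x : ℝ) : ℂ)) - 1‖
        = ‖Complex.exp (Complex.I * ((((-n).toNat : ℕ) : ℂ) * (x:ℂ))) - 1‖ := by push_cast; ring_nf
      _ ≤ _ := by rw [show ((n.natAbs : ℝ) : ℝ) = (((n.natAbs : ℕ) : ℝ)) from rfl]; exact_mod_cast hb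

lemma mult_bound (n : ℤ) (ε x : ℝ) (hε : ε = 1 ∨ ε = -1) :
    ‖(Complex.exp (Complex.I * ((n : ℝ) * x)) - 1) /
      (Complex.exp (Complex.I * (ε * x)) - 1)‖ ≤ (n.natAbs : ℝ) := by
  have hden : ‖Complex.exp (Complex.I * (ε * x)) - 1‖ = ‖Complex.exp (Complex.I * x) - 1‖ := by
    rcases hε with h | h
    · rw [h]; norm_num
    · rw [h]
      have : ((-1 : ℝ) * x : ℝ) = (-x : ℝ) := by ring
      rw [show ((-1 : ℝ) * x : ℂ) = ((-x : ℝ) : ℂ) by push_cast; ring]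
      exact neg_norm x
  rcases eq_or_ne (Complex.exp (Complex.I * (ε * x)) - 1) 0 with h0 | h0
  · simp [h0]
  · rw [norm_div, hden, div_le_iff₀ (by
      rw [← hden]; exact norm_pos_iff.mpr h0)]
    exact int_bound n x

lemma anorm_mul_le (ρ s : ℝ) (m f : (ℕ →₀ ℤ) → ℂ) (C : NNReal)
    (hm : ∀ k, ‖m k‖₊ ≤ C) :
    anorm ρ s (fun k => m k * f k) ≤ (C : ENNReal) * anorm ρ s f := by
  rw [anorm, anorm, ← ENNReal.tsum_mul_left]
  refine ENNReal.tsum_le_tsum fun k => ?_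
  rw [← mul_assoc]
  gcongr
  calc (‖m k * f k‖₊ : ENNReal) = (‖m k‖₊ : ENNReal) * ‖f k‖₊ := by
        rw [nnnorm_mul]; push_cast; ring
    _ ≤ (C : ENNReal) * ‖f k‖₊ := by gcongr; exact_mod_cast hm k

/-- bound on the transfer operators.  `𝒮_n` acts on Fourier coefficients by
multiplication with `e^{i n ω α·k} − 1`, and `𝒮_{±1}⁻¹` is its zero-average right inverse;
hence `ℒ_n^± = 𝒮_{±1}⁻¹ 𝒮_n` and `ℛ_n^± = 𝒮_n 𝒮_{±1}⁻¹` act by the multiplier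
`(e^{i n ω α·k} − 1)/(e^{± i ω α·k} − 1)` on nonzero modes (and by `0` on the zero mode).
Under the Diophantine condition both are bounded by `|n|` on the weighted spaces:
`‖ℒ_n^± f‖_ρ ≤ |n| ‖f‖_ρ` and, for zero-average `g`, `‖ℛ_n^± g‖_ρ ≤ |n| ‖g‖_ρ`. -/
theorem stmt14 (τ ν s ρ : ℝ) (hτ : 0 < τ) (hν : 0 < ν) (hs : 0 < s)
    (ω : ℝ) (α : ℕ → ℝ) (hα : ∀ j, α j ∈ Set.Icc (0 : ℝ) 1)
    (hdio : ∀ k : ℕ →₀ ℤ, k ≠ 0 → ∀ m : ℤ,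
      ν / dprod τ k ≤ |ω * adot α k - 2 * (m : ℝ) * Real.pi|)
    (n : ℤ) (ε : ℝ) (hε : ε = 1 ∨ ε = -1) :
    (∀ f : (ℕ →₀ ℤ) → ℂ,
      anorm ρ s (fun k => if k = 0 then 0 else
          (Complex.exp (Complex.I * ((n : ℝ) * (ω * adot α k))) - 1) /
            (Complex.exp (Complex.I * (ε * (ω * adot α k))) - 1) * f k) ≤
        (n.natAbs : ENNReal) * anorm ρ s f) ∧
    (∀ g : (ℕ →₀ ℤ) → ℂ, g 0 = 0 →
      anorm ρ s (fun k => if k = 0 then 0 else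
          (Complex.exp (Complex.I * ((n : ℝ) * (ω * adot α k))) - 1) /
            (Complex.exp (Complex.I * (ε * (ω * adot α k))) - 1) * g k) ≤
        (n.natAbs : ENNReal) * anorm ρ s g) := by
  have key : ∀ f : (ℕ →₀ ℤ) → ℂ,
      anorm ρ s (fun k => if k = 0 then 0 else
          (Complex.exp (Complex.I * ((n : ℝ) * (ω * adot α k))) - 1) /
            (Complex.exp (Complex.I * (ε * (ω * adot α k))) - 1) * f k) ≤
        (n.natAbs : ENNReal) * anorm ρ s f := by
    intro f
    have heq : (fun k : ℕ →₀ ℤ => if k = 0 then 0 else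
          (Complex.exp (Complex.I * ((n : ℝ) * (ω * adot α k))) - 1) /
            (Complex.exp (Complex.I * (ε * (ω * adot α k))) - 1) * f k)
        = fun k => (if k = 0 then (0 : ℂ) else
          (Complex.exp (Complex.I * ((n : ℝ) * (ω * adot α k))) - 1) /
            (Complex.exp (Complex.I * (ε * (ω * adot α k))) - 1)) * f k := by
      funext k; by_cases h : k = 0 <;> simp [h]
    rw [heq]
    have hb : ∀ k : ℕ →₀ ℤ, ‖if k = 0 then (0 : ℂ) else
          (Complex.exp (Complex.I * ((n : ℝ) * (ω * adot α k))) - 1) /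
            (Complex.exp (Complex.I * (ε * (ω * adot α k))) - 1)‖₊ ≤ (n.natAbs : NNReal) := by
      intro k
      by_cases h : k = 0
      · simp [h]
      · simp only [h, if_false]
        rw [← NNReal.coe_le_coe, coe_nnnorm, NNReal.coe_natCast]
        have hm := mult_bound n ε (ω * adot α k) hε
        refine le_trans (le_of_eq ?_) hm
        push_cast
        ring_nf
    have := anorm_mul_le ρ s _ f (n.natAbs : NNReal) hb
    exact_mod_cast this
  exact ⟨key, fun g _ => key g⟩
end
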